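/- arXiv:2207.07822 — 4 statements merged into one kernel-verified Lean document; each statement's English description precedes it below -/
import Mathlib

section
/- Let ν ∈ [0,1], B > 0 and P ≥ 0, and let v_1, …, v_n be vectors in ℝ^d such that there is a subset S ⊆ {1,…,n} with |S| ≤ ν·n, ‖v_i‖₂ ≤ B·n for all i ∈ S, and ‖v_i‖₂ ≤ P for all i ∉ S. Then the uniform sampling variance satisfies σ_uni² ≤ ν·B²·n² + P², while the importance sampling variance satisfies σ_opt² ≤ 2ν²·B²·n² + 2P². -/
set_option maxHeartbeats 1000000 in
/-- Let `ν ∈ [0,1]`, `B > 0`, `P ≥ 0`, and suppose a subset `S` of the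
indices with `|S| ≤ ν·n` satisfies `‖v i‖₂ ≤ B·n` for `i ∈ S` and `‖v i‖₂ ≤ P` for
`i ∉ S`. Then the uniform sampling variance satisfies `σ_uni² ≤ ν·B²·n² + P²`, and
the importance sampling variance satisfies `σ_opt² ≤ 2ν²·B²·n² + 2P²`. -/
theorem mixed_magnitude_variance_bounds (d n : ℕ) (hn : 0 < n)
    (ν B P : ℝ) (hν0 : 0 ≤ ν) (hν1 : ν ≤ 1) (hB : 0 < B) (hP : 0 ≤ P)
    (v : Fin n → EuclideanSpace ℝ (Fin d))
    (S : Finset (Fin n)) (hS : (S.card : ℝ) ≤ ν * n)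
    (hin : ∀ i ∈ S, ‖v i‖ ≤ B * n) (hout : ∀ i ∉ S, ‖v i‖ ≤ P) :
    ((1 / (n : ℝ) ^ 2) *
        ((n : ℝ) * ∑ i, ‖v i‖ ^ 2 - (n : ℝ) ^ 2 * ‖(1 / (n : ℝ)) • ∑ i, v i‖ ^ 2)
      ≤ ν * B ^ 2 * (n : ℝ) ^ 2 + P ^ 2)
    ∧ ((1 / (n : ℝ) ^ 2) *
        ((∑ i, ‖v i‖) ^ 2 - (n : ℝ) ^ 2 * ‖(1 / (n : ℝ)) • ∑ i, v i‖ ^ 2)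
      ≤ 2 * ν ^ 2 * B ^ 2 * (n : ℝ) ^ 2 + 2 * P ^ 2) := by

  have hn' : (0:ℝ) < n := by exact_mod_cast hn
  set m : ℝ := (S.card : ℝ) with hm
  have hm0 : 0 ≤ m := by positivity
  have hmn : m ≤ n := by
    have := Finset.card_le_univ S
    simp only [Fintype.card_fin] at this
    rw [hm]; exact_mod_cast this
  have hsplit2 : ∑ i, ‖v i‖ ^ 2 = ∑ i ∈ S, ‖v i‖ ^ 2 + ∑ i ∈ Sᶜ, ‖v i‖ ^ 2 :=
    (Finset.sum_add_sum_compl S _).symm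
  have hsplit1 : ∑ i, ‖v i‖ = ∑ i ∈ S, ‖v i‖ + ∑ i ∈ Sᶜ, ‖v i‖ :=
    (Finset.sum_add_sum_compl S _).symm
  have hcc : (Sᶜ.card : ℝ) ≤ n := by
    have := Finset.card_le_univ Sᶜ
    simp only [Fintype.card_fin] at this
    exact_mod_cast this
  have hS2 : ∑ i ∈ S, ‖v i‖ ^ 2 ≤ m * (B * n) ^ 2 := by
    calc ∑ i ∈ S, ‖v i‖ ^ 2 ≤ ∑ i ∈ S, (B * n) ^ 2 :=
          Finset.sum_le_sum fun i hi => by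
            have := hin i hi
            have h0 := norm_nonneg (v i)
            nlinarith
      _ = m * (B * n) ^ 2 := by rw [Finset.sum_const, nsmul_eq_mul]
  have hSc2 : ∑ i ∈ Sᶜ, ‖v i‖ ^ 2 ≤ n * P ^ 2 := by
    calc ∑ i ∈ Sᶜ, ‖v i‖ ^ 2 ≤ ∑ i ∈ Sᶜ, P ^ 2 :=
          Finset.sum_le_sum fun i hi => by
            have := hout i (Finset.mem_compl.mp hi)
            have h0 := norm_nonneg (v i)
            nlinarith
      _ = (Sᶜ.card : ℝ) * P ^ 2 := by rw [Finset.sum_const, nsmul_eq_mul]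
      _ ≤ n * P ^ 2 := by nlinarith
  have hS1 : ∑ i ∈ S, ‖v i‖ ≤ m * (B * n) := by
    calc ∑ i ∈ S, ‖v i‖ ≤ ∑ i ∈ S, (B * n) := Finset.sum_le_sum fun i hi => hin i hi
      _ = m * (B * n) := by rw [Finset.sum_const, nsmul_eq_mul]
  have hSc1 : ∑ i ∈ Sᶜ, ‖v i‖ ≤ n * P := by
    calc ∑ i ∈ Sᶜ, ‖v i‖ ≤ ∑ i ∈ Sᶜ, P :=
          Finset.sum_le_sum fun i hi => hout i (Finset.mem_compl.mp hi)
      _ = (Sᶜ.card : ℝ) * P := by rw [Finset.sum_const, nsmul_eq_mul]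
      _ ≤ n * P := by nlinarith
  have hsum1nn : (0:ℝ) ≤ ∑ i, ‖v i‖ := Finset.sum_nonneg fun i _ => norm_nonneg _
  have hX : (0:ℝ) ≤ ‖(1 / (n : ℝ)) • ∑ i, v i‖ ^ 2 := by positivity
  constructor
  · rw [one_div, inv_mul_le_iff₀ (by positivity)]
    have hsum2 : ∑ i, ‖v i‖ ^ 2 ≤ ν * n * (B * n) ^ 2 + n * P ^ 2 := by
      nlinarith [mul_le_mul_of_nonneg_right hS (show (0:ℝ) ≤ (B * n) ^ 2 by positivity)]
    nlinarith [mul_le_mul_of_nonneg_left hsum2 hn'.le, mul_nonneg (sq_nonneg (n:ℝ)) hX]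
  · rw [one_div, inv_mul_le_iff₀ (by positivity)]
    have hub : ∑ i, ‖v i‖ ≤ m * (B * n) + n * P := by
      rw [hsplit1]; linarith
    have hsq : (∑ i, ‖v i‖) ^ 2 ≤ (m * (B * n) + n * P) ^ 2 := by nlinarith
    have hm2 : m ^ 2 ≤ ν ^ 2 * n ^ 2 := by nlinarith
    have hfin : (∑ i, ‖v i‖) ^ 2 ≤ (n:ℝ) ^ 2 * (2 * ν ^ 2 * B ^ 2 * n ^ 2 + 2 * P ^ 2) := by
      nlinarith [hsq, sq_nonneg (m * (B * n) - n * P),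
        mul_le_mul_of_nonneg_right hm2 (show (0:ℝ) ≤ (B * n) ^ 2 by positivity)]
    linarith [mul_nonneg (sq_nonneg (n:ℝ)) hX]
end

section
/- In the CountSketch setup, for every k ∈ {1,…,n} the CountSketch estimate Y_k = σ(k)·Σ_{j : h(j)=h(k)} σ(j)·v_j satisfies E[‖Y_k − v_k‖₂²] ≤ (1/b)·Σ_{j ≠ k} ‖v_j‖₂². -/
open MeasureTheory ProbabilityTheory

/-- A family of random variables is `k`-wise independent if every subfamily of at
most `k` of them is (mutually) independent. -/
def KWiseIndepFun {Ω ι β : Type*} [MeasurableSpace Ω] [MeasurableSpace β]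
    (k : ℕ) (f : ι → Ω → β) (μ : Measure Ω) : Prop :=
  ∀ s : Finset ι, s.card ≤ k →
    iIndepFun (m := fun _ : s => (inferInstance : MeasurableSpace β)) (fun i : s => f i) μ

/-! On the full-measure event where every sign is `±1`, the error is
`Y k - v k = ∑_{j ≠ k} c_j • v j` with `c_j = 1[h j = h k] σ(k) σ(j)`. These coefficients are
orthogonal in `L²`: for `j ≠ l` the product `c_j c_l` splits as a function of the hashes times
`σ(j) σ(l)`, so by independence of the two families and of `σ(j), σ(l)` its mean is
`E[…] · E[σ(j)] E[σ(l)] = 0`. Hence `E‖Y k - v k‖² = ∑_{j ≠ k} E[c_j²] ‖v j‖²`, and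
`E[c_j²] = P(h j = h k) = 1/b` by pairwise independence and uniformity of the hashes; so the
bound holds with equality. -/

open Finset

section

variable {Ω ι β E : Type*} [MeasurableSpace Ω] {μ : Measure Ω}

theorem integral_norm_sum_smul_sq_of_orthogonal [NormedAddCommGroup E] [InnerProductSpace ℝ E]
    (s : Finset ι) (c : ι → Ω → ℝ) (v : ι → E) (hc : ∀ j ∈ s, MemLp (c j) 2 μ)
    (horth : ∀ j ∈ s, ∀ l ∈ s, j ≠ l → ∫ ω, c j ω * c l ω ∂μ = 0) :
    ∫ ω, ‖∑ j ∈ s, c j ω • v j‖ ^ 2 ∂μ = ∑ j ∈ s, (∫ ω, c j ω ^ 2 ∂μ) * ‖v j‖ ^ 2 := by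
  have hint : ∀ j ∈ s, ∀ l ∈ s, Integrable (fun ω => c j ω * c l ω * inner ℝ (v j) (v l)) μ :=
    fun j hj l hl => ((hc j hj).integrable_mul (hc l hl)).mul_const _
  have hexpand (ω : Ω) : ‖∑ j ∈ s, c j ω • v j‖ ^ 2 =
      ∑ j ∈ s, ∑ l ∈ s, c j ω * c l ω * inner ℝ (v j) (v l) := by
    simp_rw [← real_inner_self_eq_norm_sq, sum_inner, inner_sum, real_inner_smul_left,
      real_inner_smul_right, mul_assoc]
  simp only [hexpand]
  rw [integral_finsetSum s fun j hj => integrable_finsetSum s (hint j hj)]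
  refine sum_congr rfl fun j hj => ?_
  rw [integral_finsetSum s (hint j hj), sum_eq_single_of_mem j hj fun l hl hlj => by
      rw [integral_mul_const, horth j hj l hl hlj.symm, zero_mul],
    integral_mul_const, real_inner_self_eq_norm_sq]
  simp only [sq]

theorem ProbabilityTheory.IndepFun.measure_eq_eq_of_uniform [IsProbabilityMeasure μ]
    {α : Type*} [Fintype α] [MeasurableSpace α] [MeasurableSingletonClass α] {X Y : Ω → α}
    (hXY : IndepFun X Y μ)
    (hX : Measurable X) (hY : Measurable Y) {p : ENNReal} (hunif : ∀ a, μ {ω | X ω = a} = p) :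
    μ {ω | X ω = Y ω} = p := by
  have hfibres : {ω | X ω = Y ω} = ⋃ a, X ⁻¹' {a} ∩ Y ⁻¹' {a} := by
    ext ω; simp [eq_comm]
  calc μ {ω | X ω = Y ω} = ∑ a, μ (X ⁻¹' {a} ∩ Y ⁻¹' {a}) := by
        rw [hfibres, measure_iUnion _ fun a => (hX (measurableSet_singleton a)).inter
          (hY (measurableSet_singleton a)), tsum_fintype]
        intro a a' haa'
        exact Set.disjoint_left.2 fun ω h h' => haa' (h.1.symm.trans h'.1)
    _ = p * ∑ a, μ (Y ⁻¹' {a}) := by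
        rw [mul_sum]
        refine sum_congr rfl fun a _ => ?_
        rw [hXY.measure_inter_preimage_eq_mul _ _ (measurableSet_singleton a)
          (measurableSet_singleton a)]
        exact congrArg (· * _) (hunif a)
    _ = p := by
        rw [sum_measure_preimage_singleton _ fun a _ => hY (measurableSet_singleton a)]
        simp

theorem KWiseIndepFun.indepFun {β : Type*} [MeasurableSpace β] {k : ℕ} {f : ι → Ω → β}
    (hf : KWiseIndepFun k f μ) (hk : 2 ≤ k) {i j : ι} (hij : i ≠ j) : IndepFun (f i) (f j) μ := by
  classical
  exact (hf {i, j} (card_le_two.trans hk)).indepFun (i := ⟨i, by simp⟩) (j := ⟨j, by simp⟩)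
    (by simpa [Subtype.ext_iff] using hij)

def IsRademacher (s : Ω → ℝ) (μ : Measure Ω) : Prop :=
  μ {ω | s ω = 1} = 2⁻¹ ∧ μ {ω | s ω = -1} = 2⁻¹

namespace IsRademacher

variable [IsProbabilityMeasure μ] {s : Ω → ℝ}

theorem ae_eq_one_or_eq_neg_one (hs : IsRademacher s μ) (hm : Measurable s) :
    ∀ᵐ ω ∂μ, s ω = 1 ∨ s ω = -1 := by
  have h₁ : MeasurableSet {ω | s ω = 1} := hm (measurableSet_singleton 1)
  have h₂ : MeasurableSet {ω | s ω = -1} := hm (measurableSet_singleton (-1))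
  have hdisj : Disjoint {ω | s ω = 1} {ω | s ω = -1} :=
    Set.disjoint_left.2 fun ω (h : s ω = 1) (h' : s ω = -1) => by norm_num [h] at h'
  refine mem_ae_iff.2 <| (prob_compl_eq_zero_iff (h₁.union h₂)).2 ?_
  rw [measure_union hdisj h₂, hs.1, hs.2, ENNReal.inv_two_add_inv_two]

theorem ae_sq_eq_one (hs : IsRademacher s μ) (hm : Measurable s) : ∀ᵐ ω ∂μ, s ω ^ 2 = 1 :=
  (hs.ae_eq_one_or_eq_neg_one hm).mono fun _ => sq_eq_one_iff.2

theorem integral_eq_zero (hs : IsRademacher s μ) (hm : Measurable s) : ∫ ω, s ω ∂μ = 0 := by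
  have h₁ : MeasurableSet {ω | s ω = 1} := hm (measurableSet_singleton 1)
  have h₂ : MeasurableSet {ω | s ω = -1} := hm (measurableSet_singleton (-1))
  have hsplit : s =ᵐ[μ] fun ω => {ω | s ω = 1}.indicator 1 ω - {ω | s ω = -1}.indicator 1 ω := by
    filter_upwards [hs.ae_eq_one_or_eq_neg_one hm] with ω hω
    rcases hω with hω | hω <;> norm_num [Set.indicator, hω]
  rw [integral_congr_ae hsplit, integral_sub ((integrable_const 1).indicator h₁)
    ((integrable_const 1).indicator h₂), integral_indicator_one h₁, integral_indicator_one h₂,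
    measureReal_def, measureReal_def, hs.1, hs.2, sub_self]

end IsRademacher

def countSketchCoeff [DecidableEq β] (h : ι → β) (s : ι → ℝ) (k j : ι) : ℝ :=
  if h j = h k then s k * s j else 0

section Deterministic

variable [DecidableEq β] {k : ι}

theorem countSketch_sub_eq_sum [Fintype ι] [DecidableEq ι] [AddCommGroup E] [Module ℝ E]
    (h : ι → β) (s : ι → ℝ) (v : ι → E) (hk : s k ^ 2 = 1) :
    s k • ∑ j ∈ univ.filter (fun j => h j = h k), s j • v j - v k =
      ∑ j ∈ univ.erase k, countSketchCoeff h s k j • v j := by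
  rw [sum_filter, ← add_sum_erase _ _ (mem_univ k), if_pos rfl, smul_add, smul_smul, ← sq, hk,
    one_smul, add_sub_cancel_left, smul_sum]
  refine sum_congr rfl fun j _ => ?_
  unfold countSketchCoeff
  split_ifs <;> simp [smul_smul]

theorem countSketchCoeff_sq {h : ι → β} {s : ι → ℝ} {j : ι} (hs : ∀ i, s i ^ 2 = 1) :
    countSketchCoeff h s k j ^ 2 = if h j = h k then 1 else 0 := by
  unfold countSketchCoeff
  split_ifs <;> simp [mul_pow, hs]

theorem countSketchCoeff_mul {h : ι → β} {s : ι → ℝ} {j l : ι} (hs : ∀ i, s i ^ 2 = 1) :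
    countSketchCoeff h s k j * countSketchCoeff h s k l =
      (if h j = h k ∧ h l = h k then 1 else 0) * (s j * s l) := by
  unfold countSketchCoeff
  split_ifs <;> simp_all [-sq_eq_one_iff]
  linear_combination s j * s l * hs k

end Deterministic

section Random

variable [DecidableEq β] [MeasurableSpace β] [MeasurableSingletonClass β] [Countable β]
  {h : ι → Ω → β} {sg : ι → Ω → ℝ} {k : ι}

theorem memLp_countSketchCoeff [IsFiniteMeasure μ] {j : ι} (hmeas : ∀ i, Measurable (h i))
    (smeas : ∀ i, Measurable (sg i)) (hsq : ∀ᵐ ω ∂μ, ∀ i, sg i ω ^ 2 = 1) :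
    MemLp (fun ω => countSketchCoeff (fun i => h i ω) (fun i => sg i ω) k j) 2 μ := by
  refine MemLp.of_bound (Measurable.aestronglyMeasurable ?_) 1 ?_
  · exact Measurable.ite (measurableSet_eq_fun (hmeas j) (hmeas k)) ((smeas k).mul (smeas j))
      measurable_const
  · filter_upwards [hsq] with ω hω
    rw [Real.norm_eq_abs, ← sq_le_one_iff_abs_le_one, countSketchCoeff_sq hω]
    split_ifs <;> norm_num

theorem integral_countSketchCoeff_sq [IsProbabilityMeasure μ] [Fintype β] {j : ι}
    (hj : Measurable (h j)) (hk : Measurable (h k)) (hind : IndepFun (h j) (h k) μ) {p : ENNReal}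
    (hunif : ∀ a, μ {ω | h j ω = a} = p) (hsq : ∀ᵐ ω ∂μ, ∀ i, sg i ω ^ 2 = 1) :
    ∫ ω, countSketchCoeff (fun i => h i ω) (fun i => sg i ω) k j ^ 2 ∂μ = p.toReal := by
  have hcoll : MeasurableSet {ω | h j ω = h k ω} := measurableSet_eq_fun hj hk
  calc ∫ ω, countSketchCoeff (fun i => h i ω) (fun i => sg i ω) k j ^ 2 ∂μ
      = ∫ ω, {ω | h j ω = h k ω}.indicator 1 ω ∂μ := by
        refine integral_congr_ae (hsq.mono fun ω hω => ?_)
        simp [countSketchCoeff_sq hω, Set.indicator_apply]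
    _ = p.toReal := by
        rw [integral_indicator_one hcoll, measureReal_def,
          hind.measure_eq_eq_of_uniform hj hk hunif]

theorem integral_countSketchCoeff_mul {j l : ι} (hmeas : ∀ i, Measurable (h i))
    (smeas : ∀ i, Measurable (sg i))
    (hs_indep : IndepFun (fun ω i => h i ω) (fun ω i => sg i ω) μ)
    (hsign : IndepFun (sg j) (sg l) μ) (hj : ∫ ω, sg j ω ∂μ = 0)
    (hsq : ∀ᵐ ω ∂μ, ∀ i, sg i ω ^ 2 = 1) :
    ∫ ω, countSketchCoeff (fun i => h i ω) (fun i => sg i ω) k j *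
      countSketchCoeff (fun i => h i ω) (fun i => sg i ω) k l ∂μ = 0 := by
  set F : (ι → β) → ℝ := fun x => if x j = x k ∧ x l = x k then 1 else 0
  set G : (ι → ℝ) → ℝ := fun y => y j * y l
  have hF : Measurable F := Measurable.ite
    ((measurableSet_eq_fun (measurable_pi_apply j) (measurable_pi_apply k)).inter
      (measurableSet_eq_fun (measurable_pi_apply l) (measurable_pi_apply k)))
    measurable_const measurable_const
  have hG : Measurable G := (measurable_pi_apply j).mul (measurable_pi_apply l)
  calc ∫ ω, countSketchCoeff (fun i => h i ω) (fun i => sg i ω) k j *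
        countSketchCoeff (fun i => h i ω) (fun i => sg i ω) k l ∂μ
      = ∫ ω, F (fun i => h i ω) * G (fun i => sg i ω) ∂μ :=
        integral_congr_ae (hsq.mono fun ω hω => countSketchCoeff_mul hω)
    _ = (∫ ω, F (fun i => h i ω) ∂μ) * ∫ ω, sg j ω * sg l ω ∂μ :=
        hs_indep.integral_fun_comp_mul_comp (measurable_pi_lambda _ hmeas).aemeasurable
          (measurable_pi_lambda _ smeas).aemeasurable hF.aestronglyMeasurable
          hG.aestronglyMeasurable
    _ = 0 := by
        rw [hsign.integral_fun_mul_eq_mul_integral (smeas j).aestronglyMeasurable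
          (smeas l).aestronglyMeasurable, hj, zero_mul, mul_zero]

end Random

end

theorem countSketch_variance_general (d n b : ℕ)
    {Ω : Type*} [MeasurableSpace Ω] (μ : Measure Ω) [IsProbabilityMeasure μ]
    (v : Fin n → EuclideanSpace ℝ (Fin d))
    (h : Fin n → Ω → Fin b) (sg : Fin n → Ω → ℝ)
    (hmeas : ∀ i, Measurable (h i)) (smeas : ∀ i, Measurable (sg i))
    (hunif : ∀ i, ∀ j : Fin b, μ {ω | h i ω = j} = (b : ENNReal)⁻¹)
    (hpair : KWiseIndepFun 2 h μ)
    (sunif : ∀ i, μ {ω | sg i ω = 1} = 2⁻¹ ∧ μ {ω | sg i ω = -1} = 2⁻¹)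
    (sfour : KWiseIndepFun 4 sg μ)
    (hs_indep : IndepFun (fun ω (i : Fin n) => h i ω) (fun ω (i : Fin n) => sg i ω) μ)
    (k : Fin n) :
    ∫ ω, ‖(sg k ω •
        ∑ j ∈ Finset.univ.filter (fun j => h j ω = h k ω), sg j ω • v j) - v k‖ ^ 2 ∂μ
      ≤ (1 / (b : ℝ)) * ∑ j ∈ Finset.univ.erase k, ‖v j‖ ^ 2 := by
  have hsq : ∀ᵐ ω ∂μ, ∀ i, sg i ω ^ 2 = 1 :=
    ae_all_iff.2 fun i => IsRademacher.ae_sq_eq_one (sunif i) (smeas i)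
  set c : Fin n → Ω → ℝ := fun j ω => countSketchCoeff (fun i => h i ω) (fun i => sg i ω) k j
  refine le_of_eq ?_
  calc _ = ∫ ω, ‖∑ j ∈ univ.erase k, c j ω • v j‖ ^ 2 ∂μ :=
        integral_congr_ae <| hsq.mono fun ω hω => by
          rw [countSketch_sub_eq_sum (fun i => h i ω) (fun i => sg i ω) v (hω k)]
    _ = ∑ j ∈ univ.erase k, (∫ ω, c j ω ^ 2 ∂μ) * ‖v j‖ ^ 2 :=
        integral_norm_sum_smul_sq_of_orthogonal _ c v
          (fun j _ => memLp_countSketchCoeff hmeas smeas hsq)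
          fun j _ l _ hjl => integral_countSketchCoeff_mul hmeas smeas hs_indep
            (sfour.indepFun (by norm_num) hjl)
            (IsRademacher.integral_eq_zero (sunif j) (smeas j)) hsq
    _ = (1 / (b : ℝ)) * ∑ j ∈ univ.erase k, ‖v j‖ ^ 2 := by
        rw [mul_sum]
        refine sum_congr rfl fun j hj => ?_
        rw [integral_countSketchCoeff_sq (hmeas j) (hmeas k)
          (hpair.indepFun le_rfl (ne_of_mem_erase hj)) (hunif j) hsq, ENNReal.toReal_inv,
          ENNReal.toReal_natCast, one_div]

/-- In the CountSketch setup — fixed vectors `v 1, …, v n ∈ ℝ^d`, `b ≥ 1`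
buckets, pairwise independent uniform bucket indices `h i`, 4-wise independent uniform
random signs `sg i ∈ {−1, +1}`, with the sign family independent of the hash family —
for every `k` the CountSketch estimate `Y k = sg k • ∑_{j : h j = h k} sg j • v j`
satisfies `E[‖Y k − v k‖₂²] ≤ (1/b)·∑_{j ≠ k} ‖v j‖₂²`. -/
theorem countSketch_variance (d n b : ℕ) (hb : 1 ≤ b)
    {Ω : Type*} [MeasurableSpace Ω] (μ : Measure Ω) [IsProbabilityMeasure μ]
    (v : Fin n → EuclideanSpace ℝ (Fin d))
    (h : Fin n → Ω → Fin b) (sg : Fin n → Ω → ℝ)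
    (hmeas : ∀ i, Measurable (h i)) (smeas : ∀ i, Measurable (sg i))
    (hunif : ∀ i, ∀ j : Fin b, μ {ω | h i ω = j} = (b : ENNReal)⁻¹)
    (hpair : KWiseIndepFun 2 h μ)
    (sunif : ∀ i, μ {ω | sg i ω = 1} = 2⁻¹ ∧ μ {ω | sg i ω = -1} = 2⁻¹)
    (sfour : KWiseIndepFun 4 sg μ)
    (hs_indep : IndepFun (fun ω (i : Fin n) => h i ω) (fun ω (i : Fin n) => sg i ω) μ)
    (k : Fin n) :
    ∫ ω, ‖(sg k ω •
        ∑ j ∈ Finset.univ.filter (fun j => h j ω = h k ω), sg j ω • v j) - v k‖ ^ 2 ∂μ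
      ≤ (1 / (b : ℝ)) * ∑ j ∈ Finset.univ.erase k, ‖v j‖ ^ 2 :=
  countSketch_variance_general d n b μ v h sg hmeas smeas hunif hpair sunif sfour hs_indep k
end

section
/- Let ℓ = 2m+1 be odd, let v ∈ ℝ, and let (Y_1, …, Y_ℓ) be a random vector of integrable real random variables whose joint distribution is symmetric about (v, …, v), i.e., (Y_1 − v, …, Y_ℓ − v) has the same joint distribution as (v − Y_1, …, v − Y_ℓ). Then the median of Y_1, …, Y_ℓ (the (m+1)-st smallest value) is integrable and E[median(Y_1, …, Y_ℓ)] = v; i.e., the median is an unbiased estimator of v. -/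
open MeasureTheory

/-- The median of an odd number `2m+1` of reals: the `(m+1)`-st smallest value. -/
noncomputable def oddMedian {m : ℕ} (g : Fin (2 * m + 1) → ℝ) : ℝ :=
  g (Tuple.sort g ⟨m, by omega⟩)

/-!
Order statistics commute with monotone maps, and an antitone map sends the `k`-th smallest value
to the `k`-th largest; since the middle index of `2m+1` is fixed by reversal, the median commutes
with `x ↦ x - v` and with `x ↦ v - x`. Hence `med Y - v` and `v - med Y` are the medians of the
identically distributed vectors `Y - v` and `v - Y`, so they have the same expectation, which
forces `E[med Y] = v`.
-/

namespace Tuple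

variable {n : ℕ} {α β : Type*} [LinearOrder α] [LinearOrder β]

theorem comp_apply_sort_of_monotone {f : α → β} (hf : Monotone f) (g : Fin n → α)
    (k : Fin n) :
    f (g (sort (f ∘ g) k)) = f (g (sort g k)) :=
  congrFun (comp_sort_eq_comp_iff_monotone (f := f ∘ g).mpr (hf.comp (monotone_sort g))).symm k

theorem comp_apply_sort_of_antitone {f : α → β} (hf : Antitone f) (g : Fin n → α)
    (k : Fin n) :
    f (g (sort (f ∘ g) k)) = f (g (sort g k.rev)) := by
  have hsorted : Monotone ((f ∘ g) ∘ Fin.revPerm.trans (sort g)) := fun i j hij =>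
    hf (monotone_sort g (Fin.rev_le_rev.mpr hij))
  exact congrFun (comp_sort_eq_comp_iff_monotone (f := f ∘ g).mpr hsorted).symm k

variable [TopologicalSpace α] [OrderClosedTopology α] [SecondCountableTopology α]
  [MeasurableSpace α] [OpensMeasurableSpace α]

theorem measurableSet_sort_eq (σ : Equiv.Perm (Fin n)) :
    MeasurableSet {g : Fin n → α | sort g = σ} := by
  simp_rw [eq_comm (a := sort _), eq_sort_iff, Monotone, Function.comp_apply, le_antisymm_iff]
  exact Measurable.setOf (by fun_prop)

theorem measurable_sort_apply (k : Fin n) : Measurable fun g : Fin n → α => sort g k := by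
  refine measurable_to_countable' fun j => ?_
  have hfiber : (fun g : Fin n → α => sort g k) ⁻¹' {j} =
      ⋃ (σ : Equiv.Perm (Fin n)) (_ : σ k = j), {g | sort g = σ} := by
    ext g; simp
  rw [hfiber]
  exact MeasurableSet.iUnion fun σ => MeasurableSet.iUnion fun _ => measurableSet_sort_eq σ

theorem measurable_apply_sort (k : Fin n) : Measurable fun g : Fin n → α => g (sort g k) :=
  (measurable_from_prod_countable_left (f := fun p : (Fin n → α) × Fin n => p.1 p.2)
    measurable_pi_apply).comp (measurable_id.prodMk (measurable_sort_apply k))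

end Tuple

section oddMedian

variable {m : ℕ}

lemma Fin.rev_middle : Fin.rev (⟨m, by omega⟩ : Fin (2 * m + 1)) = ⟨m, by omega⟩ := by
  ext; simp only [Fin.val_rev]; omega

theorem oddMedian_comp_of_monotone {f : ℝ → ℝ} (hf : Monotone f)
    (g : Fin (2 * m + 1) → ℝ) :
    oddMedian (fun i => f (g i)) = f (oddMedian g) :=
  Tuple.comp_apply_sort_of_monotone hf g _

theorem oddMedian_comp_of_antitone {f : ℝ → ℝ} (hf : Antitone f)
    (g : Fin (2 * m + 1) → ℝ) :
    oddMedian (fun i => f (g i)) = f (oddMedian g) :=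
  (Tuple.comp_apply_sort_of_antitone hf g _).trans (by rw [Fin.rev_middle]; rfl)

theorem measurable_oddMedian : Measurable (oddMedian (m := m)) :=
  Tuple.measurable_apply_sort _

theorem abs_oddMedian_le_sum (g : Fin (2 * m + 1) → ℝ) : |oddMedian g| ≤ ∑ i, |g i| :=
  Finset.single_le_sum (f := fun i => |g i|) (fun i _ => abs_nonneg (g i)) (Finset.mem_univ _)

theorem integrable_oddMedian {Ω : Type*} [MeasurableSpace Ω] {μ : Measure Ω}
    {Y : Fin (2 * m + 1) → Ω → ℝ} (hY : ∀ i, Integrable (Y i) μ) :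
    Integrable (fun ω => oddMedian (fun i => Y i ω)) μ := by
  refine (integrable_finsetSum Finset.univ fun i _ => (hY i).abs).mono'
    (measurable_oddMedian.comp_aemeasurable
      (aemeasurable_pi_lambda _ fun i => (hY i).aemeasurable)).aestronglyMeasurable ?_
  filter_upwards with ω
  simpa using abs_oddMedian_le_sum (fun i => Y i ω)

end oddMedian

theorem median_symmetric_unbiased_general {Ω : Type*} [MeasurableSpace Ω]
    (μ : Measure Ω) [IsProbabilityMeasure μ] (m : ℕ) (v : ℝ)
    (Y : Fin (2 * m + 1) → Ω → ℝ)
    (hint : ∀ i, Integrable (Y i) μ)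
    (hsym : Measure.map (fun ω (i : Fin (2 * m + 1)) => Y i ω - v) μ
          = Measure.map (fun ω (i : Fin (2 * m + 1)) => v - Y i ω) μ) :
    Integrable (fun ω => oddMedian (fun i => Y i ω)) μ
    ∧ ∫ ω, oddMedian (fun i => Y i ω) ∂μ = v := by
  have hmed_int := integrable_oddMedian hint
  refine ⟨hmed_int, ?_⟩
  have hident : ProbabilityTheory.IdentDistrib (fun ω (i : Fin (2 * m + 1)) => Y i ω - v)
      (fun ω i => v - Y i ω) μ μ :=
    ⟨aemeasurable_pi_lambda _ fun i => (hint i).aemeasurable.sub_const v,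
      aemeasurable_pi_lambda _ fun i => (hint i).aemeasurable.const_sub v, hsym⟩
  have hshift (ω : Ω) : oddMedian (fun i => Y i ω - v) = oddMedian (fun i => Y i ω) - v :=
    oddMedian_comp_of_monotone (f := (· - v)) (fun _ _ h => sub_le_sub_right h v) _
  have hreflect (ω : Ω) : oddMedian (fun i => v - Y i ω) = v - oddMedian (fun i => Y i ω) :=
    oddMedian_comp_of_antitone (f := (v - ·)) (fun _ _ h => sub_le_sub_left h v) _
  have hmean := (hident.comp measurable_oddMedian).integral_eq
  simp only [Function.comp_def, hshift, hreflect] at hmean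
  rw [integral_sub hmed_int (integrable_const v),
    integral_sub (integrable_const v) hmed_int] at hmean
  simp only [integral_const, probReal_univ, one_smul] at hmean
  linarith

/-- Let `ℓ = 2m+1` be odd and let `Y 1, …, Y ℓ` be integrable real
random variables whose joint distribution is symmetric about `(v, …, v)`, i.e.,
`(Y i − v)_i` has the same joint distribution as `(v − Y i)_i`. Then the median of
`Y 1, …, Y ℓ` (the `(m+1)`-st smallest value) is integrable and has expectation `v`;
i.e., the median is an unbiased estimator of `v`. -/
theorem median_symmetric_unbiased {Ω : Type*} [MeasurableSpace Ω]
    (μ : Measure Ω) [IsProbabilityMeasure μ] (m : ℕ) (v : ℝ)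
    (Y : Fin (2 * m + 1) → Ω → ℝ)
    (hmeas : ∀ i, Measurable (Y i))
    (hint : ∀ i, Integrable (Y i) μ)
    (hsym : Measure.map (fun ω (i : Fin (2 * m + 1)) => Y i ω - v) μ
          = Measure.map (fun ω (i : Fin (2 * m + 1)) => v - Y i ω) μ) :
    Integrable (fun ω => oddMedian (fun i => Y i ω)) μ
    ∧ ∫ ω, oddMedian (fun i => Y i ω) ∂μ = v :=
  median_symmetric_unbiased_general μ m v Y hint hsym
end

section
/- Let A ∈ ℝ^{n×d} be a matrix with rows a_1, …, a_n. For each i, define the L1 sensitivity s_i = sup { |⟨a_i, x⟩| / Σ_{j=1}^n |⟨a_j, x⟩| : x ∈ ℝ^d, Σ_{j=1}^n |⟨a_j, x⟩| > 0 } (with s_i = 0 if no such x exists). Then Σ_{i=1}^n s_i ≤ d. -/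
/-!
The vectors `y = (⟨a j, x⟩)_j` form a subspace `U` of `ℓ¹(Fin n)` of dimension at most `d`.
Maximising `|det|` over tuples of vectors of norm `≤ 1` yields an Auerbach basis `u` of `U`:
`‖u k‖₁ ≤ 1`, and by Cramer's rule every coordinate of `y` in this basis is at most `‖y‖₁`.
Expanding `y` in this basis gives `|y i| ≤ ‖y‖₁ ∑ k, |u k i|`, so the `i`-th sensitivity is at
most `∑ k, |u k i|`, and these bounds sum to `∑ k, ‖u k‖₁ ≤ dim U ≤ d`.
-/

open Module Function RealInnerProductSpace

section Auerbach

variable {𝕜 E ι : Type*} [RCLike 𝕜] [NormedAddCommGroup E] [NormedSpace 𝕜 E]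
  [Fintype ι] [DecidableEq ι]

theorem Module.Basis.continuous_det (e : Basis ι 𝕜 E) : Continuous e.det := by
  have : Continuous fun v : ι → E => e.toMatrix v :=
    continuous_pi fun i => continuous_pi fun j =>
      (continuous_apply i).comp (e.equivFunL.continuous.comp (continuous_apply j))
  simpa only [funext e.det_apply] using this.matrix_det

theorem norm_det_update_le_of_isMaxOn {e : Basis ι 𝕜 E} {v : ι → E}
    (hv : ∀ k, ‖v k‖ ≤ 1) (hmax : IsMaxOn (fun w => ‖e.det w‖) {w | ∀ k, ‖w k‖ ≤ 1} v)
    (k : ι) (x : E) : ‖e.det (update v k x)‖ ≤ ‖x‖ * ‖e.det v‖ := by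
  rcases eq_or_ne x 0 with rfl | hx
  · simp
  have hx' : 0 < ‖x‖ := norm_pos_iff.2 hx
  have hunit : ∀ j, ‖update v k ((‖x‖⁻¹ : 𝕜) • x) j‖ ≤ 1 := by
    intro j
    rcases eq_or_ne j k with rfl | hj
    · rw [update_self, norm_smul, norm_inv, RCLike.norm_ofReal, abs_norm,
        inv_mul_cancel₀ hx'.ne']
    · simpa [hj] using hv j
  have : ‖e.det (update v k ((‖x‖⁻¹ : 𝕜) • x))‖ ≤ ‖e.det v‖ := hmax hunit
  rwa [AlternatingMap.map_update_smul, norm_smul, norm_inv, RCLike.norm_ofReal, abs_norm,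
    inv_mul_le_iff₀ hx'] at this

theorem exists_auerbach_basis [FiniteDimensional 𝕜 E] :
    ∃ b : Basis (Fin (finrank 𝕜 E)) 𝕜 E, (∀ k, ‖b k‖ ≤ 1) ∧ ∀ k x, ‖b.coord k x‖ ≤ ‖x‖ := by
  have := FiniteDimensional.proper_rclike 𝕜 E
  set e := finBasis 𝕜 E
  set K := {w : Fin (finrank 𝕜 E) → E | ∀ k, ‖w k‖ ≤ 1}
  have hK : IsCompact K := by
    have : K = Set.univ.pi fun _ => Metric.closedBall 0 1 := by ext; simp [K]
    exact this ▸ isCompact_univ_pi fun _ => isCompact_closedBall _ _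
  obtain ⟨v, hvK, hmax⟩ := hK.exists_isMaxOn ⟨0, fun _ => by simp⟩
    e.continuous_det.norm.continuousOn
  have hdet : IsUnit (e.det v) := by
    set w := fun k => (‖e k‖⁻¹ : 𝕜) • e k
    have hwK : w ∈ K := fun k => by simp [w, norm_smul, e.ne_zero k]
    have hw : e.det w ≠ 0 := by
      simp [w, AlternatingMap.map_smul_univ, Finset.prod_eq_zero_iff, e.ne_zero, e.det_ne_zero]
    exact isUnit_iff_ne_zero.2 <| norm_ne_zero_iff.1 <|
      ((norm_pos_iff.2 hw).trans_le (hmax hwK)).ne'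
  obtain ⟨hli, hsp⟩ := e.is_basis_iff_det.2 hdet
  refine ⟨Basis.mk hli hsp.ge, fun k => by simpa using hvK k, fun k x => ?_⟩
  have hcramer := congrArg (· x) (e.det_smul_mk_coord_eq_det_update hli hsp.ge k)
  simp only [LinearMap.smul_apply, MultilinearMap.toLinearMap_apply, smul_eq_mul,
    AlternatingMap.coe_multilinearMap] at hcramer
  have := norm_det_update_le_of_isMaxOn hvK hmax k x
  rw [← hcramer, norm_mul, mul_comm] at this
  exact le_of_mul_le_mul_right this (norm_pos_iff.2 hdet.ne_zero)

end Auerbach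

section L1

variable {𝕜 ι : Type*} [RCLike 𝕜] [Fintype ι]

theorem Submodule.exists_l1_sensitivity_bounds_sum_le_finrank
    (U : Submodule 𝕜 (WithLp 1 (ι → 𝕜))) :
    ∃ t : ι → ℝ, (∀ i, 0 ≤ t i) ∧ ∑ i, t i ≤ finrank 𝕜 U ∧ ∀ y ∈ U, ∀ i, ‖y i‖ ≤ t i * ‖y‖ := by
  obtain ⟨b, hb, hcoord⟩ := exists_auerbach_basis (𝕜 := 𝕜) (E := U)
  refine ⟨fun i => ∑ k, ‖(b k : WithLp 1 (ι → 𝕜)) i‖, fun i => by positivity, ?_, ?_⟩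
  · calc ∑ i, ∑ k, ‖(b k : WithLp 1 (ι → 𝕜)) i‖ = ∑ k, ‖b k‖ := by
          rw [Finset.sum_comm]
          simp only [Submodule.coe_norm, PiLp.norm_eq_of_L1]
      _ ≤ ∑ _k, 1 := Finset.sum_le_sum fun k _ => hb k
      _ = finrank 𝕜 U := by simp
  · intro y hy i
    have hrepr : y = ∑ k, b.coord k ⟨y, hy⟩ • (b k : WithLp 1 (ι → 𝕜)) := by
      have := congrArg ((↑) : U → WithLp 1 (ι → 𝕜)) (b.sum_repr ⟨y, hy⟩)
      simpa only [Submodule.coe_sum, Submodule.coe_smul, Basis.coord_apply] using this.symm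
    calc ‖y i‖ = ‖∑ k, b.coord k ⟨y, hy⟩ * (b k : WithLp 1 (ι → 𝕜)) i‖ := by
          conv_lhs => rw [hrepr]
          simp
      _ ≤ ∑ k, ‖b.coord k ⟨y, hy⟩‖ * ‖(b k : WithLp 1 (ι → 𝕜)) i‖ := by
          simpa only [norm_mul] using norm_sum_le Finset.univ
            fun k => b.coord k ⟨y, hy⟩ * (b k : WithLp 1 (ι → 𝕜)) i
      _ ≤ ∑ k, ‖y‖ * ‖(b k : WithLp 1 (ι → 𝕜)) i‖ := by
          gcongr with k
          exact hcoord k ⟨y, hy⟩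
      _ = (∑ k, ‖(b k : WithLp 1 (ι → 𝕜)) i‖) * ‖y‖ := by
          rw [Finset.sum_mul]; simp only [mul_comm]

end L1

/-- For a matrix with rows `a 1, …, a n ∈ ℝ^d`, the L1 sensitivities
`s i = sup { |⟨a i, x⟩| / ∑ j, |⟨a j, x⟩| : x ∈ ℝ^d, ∑ j, |⟨a j, x⟩| > 0 }`
(with `s i = 0` if no such `x` exists, via `sSup ∅ = 0` in ℝ) sum to at most `d`. -/
theorem l1_sensitivities_sum_le (n d : ℕ) (a : Fin n → EuclideanSpace ℝ (Fin d)) :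
    ∑ i, sSup {r : ℝ | ∃ x : EuclideanSpace ℝ (Fin d),
        0 < ∑ j, |⟪a j, x⟫| ∧ r = |⟪a i, x⟫| / ∑ j, |⟪a j, x⟫|} ≤ (d : ℝ) := by
  let T : EuclideanSpace ℝ (Fin d) →ₗ[ℝ] WithLp 1 (Fin n → ℝ) :=
    (WithLp.linearEquiv 1 ℝ (Fin n → ℝ)).symm.toLinearMap ∘ₗ LinearMap.pi fun j => innerₛₗ ℝ (a j)
  have hT : ∀ x, ‖T x‖ = ∑ j, |⟪a j, x⟫| := fun x => by simp [T, PiLp.norm_eq_of_L1]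
  obtain ⟨t, ht, hsum, hle⟩ := (LinearMap.range T).exists_l1_sensitivity_bounds_sum_le_finrank
  calc ∑ i, sSup _ ≤ ∑ i, t i := Finset.sum_le_sum fun i _ => by
        refine Real.sSup_le ?_ (ht i)
        rintro _ ⟨x, hx, rfl⟩
        rw [div_le_iff₀ hx, ← hT]
        simpa [T] using hle (T x) ⟨x, rfl⟩ i
    _ ≤ finrank ℝ (LinearMap.range T) := hsum
    _ ≤ d := by
        exact_mod_cast (LinearMap.finrank_range_le T).trans finrank_euclideanSpace_fin.le
end
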